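/- Let G be a finite group acting on a smooth projective curve X, let H, N, L ≤ G with L ⊆ H ∩ N, |H| − |N| = |L|, and suppose that D_{L,p} is linearly equivalent to D_{L,q} for all p, q ∈ X. Then for every p ∈ X, the divisor D_{H,p} − D_{N,p} is linearly equivalent to D_{L,p}. -/

import Mathlib

/-- An abstract interface for a smooth projective curve over an algebraically
closed field, packaging its points, divisors (elements of the free abelian
group on points, encoded as finitely supported functions), degree, genus,
linear equivalence, the dimension `ℓ` of Riemann–Roch spaces, a canonical
divisor, and very ampleness, together with their standard properties. -/
structure SmoothProjectiveCurve where
  Point : Type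
  genus : ℕ
  /-- linear equivalence of divisors -/
  linEquiv : (Point →₀ ℤ) → (Point →₀ ℤ) → Prop
  /-- `ℓ(D) = dim H⁰(X, O_X(D))` -/
  l : (Point →₀ ℤ) → ℕ
  /-- a canonical divisor -/
  K : Point →₀ ℤ
  veryAmple : (Point →₀ ℤ) → Prop
  deg : (Point →₀ ℤ) →+ ℤ
  deg_single : ∀ p : Point, deg (Finsupp.single p 1) = 1
  linEquiv_refl : ∀ D, linEquiv D D
  linEquiv_symm : ∀ {D E}, linEquiv D E → linEquiv E D
  linEquiv_trans : ∀ {D E F}, linEquiv D E → linEquiv E F → linEquiv D F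
  linEquiv_add : ∀ {D E D' E'}, linEquiv D E → linEquiv D' E' →
    linEquiv (D + D') (E + E')
  linEquiv_neg : ∀ {D E}, linEquiv D E → linEquiv (-D) (-E)
  deg_congr : ∀ {D E}, linEquiv D E → deg D = deg E
  l_congr : ∀ {D E}, linEquiv D E → l D = l E
  riemannRoch : ∀ D, (l D : ℤ) - l (K - D) = deg D + 1 - genus
  deg_K : deg K = 2 * (genus : ℤ) - 2
  l_eq_zero_of_deg_neg : ∀ D, deg D < 0 → l D = 0
  l_le_one_of_deg_zero : ∀ D, deg D = 0 → l D ≤ 1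
  l_eq_one_iff_of_deg_zero : ∀ D, deg D = 0 → (l D = 1 ↔ linEquiv D 0)
  veryAmple_of_degree : ∀ D, (2 * (genus : ℤ) + 1) ≤ deg D → veryAmple D

/-- Decomposition of a group into left cosets of a subgroup. -/
noncomputable def cosetProdEquiv {α : Type*} [Group α] (s : Subgroup α) :
    (α ⧸ s) × s ≃ α where
  toFun x := x.1.out * x.2
  invFun k := ((QuotientGroup.mk k : α ⧸ s),
    ⟨(Quotient.out (QuotientGroup.mk k : α ⧸ s))⁻¹ * k, by
      rw [← QuotientGroup.eq]
      exact Quotient.out_eq _⟩)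
  left_inv := by
    rintro ⟨q, l, hl⟩
    have hq : (QuotientGroup.mk (q.out * l) : α ⧸ s) = q := by
      have h1 : (QuotientGroup.mk (q.out * l) : α ⧸ s) = QuotientGroup.mk q.out := by
        rw [QuotientGroup.eq]
        have : (q.out * l)⁻¹ * q.out = l⁻¹ := by group
        rw [this]
        exact s.inv_mem hl
      rw [h1]
      exact Quotient.out_eq q
    refine Prod.ext ?_ (Subtype.ext ?_)
    · exact hq
    · show (Quotient.out (QuotientGroup.mk (q.out * ((⟨l, hl⟩ : s) : α)) : α ⧸ s))⁻¹ *
        (q.out * ((⟨l, hl⟩ : s) : α)) = l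
      simp only [Subgroup.coe_mk] at hq ⊢
      rw [hq]
      group
  right_inv k := by simp

lemma linEquiv_sum (C : SmoothProjectiveCurve) {ι : Type*} (s : Finset ι)
    (f g : ι → (C.Point →₀ ℤ)) (h : ∀ i ∈ s, C.linEquiv (f i) (g i)) :
    C.linEquiv (∑ i ∈ s, f i) (∑ i ∈ s, g i) := by
  classical
  induction s using Finset.induction with
  | empty => simpa using C.linEquiv_refl 0
  | insert _ _ hx ih =>
    rw [Finset.sum_insert hx, Finset.sum_insert hx]
    exact C.linEquiv_add (h _ (Finset.mem_insert_self _ _))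
      (ih fun i hi => h i (Finset.mem_insert_of_mem hi))

lemma orbit_divisor_decomp (C : SmoothProjectiveCurve)
    {G : Type*} [Group G] [Fintype G] [MulAction G C.Point]
    (L K : Subgroup G) [Fintype K] [Fintype L] (hLK : L ≤ K) (p : C.Point)
    (hLequiv : ∀ p q : C.Point,
      C.linEquiv (∑ l : L, Finsupp.single ((l : G) • p) (1 : ℤ))
        (∑ l : L, Finsupp.single ((l : G) • q) (1 : ℤ))) :
    ∃ n : ℕ, Nat.card K = n * Nat.card L ∧
      C.linEquiv (∑ k : K, Finsupp.single ((k : G) • p) (1 : ℤ))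
        (n • ∑ l : L, Finsupp.single ((l : G) • p) (1 : ℤ)) := by
  classical
  set L' := L.subgroupOf K with hL'
  have : Fintype (K ⧸ L') := Fintype.ofFinite _
  refine ⟨Fintype.card (K ⧸ L'), ?_, ?_⟩
  · rw [Subgroup.card_eq_card_quotient_mul_card_subgroup L', Nat.card_eq_fintype_card]
    congr 1
    exact Nat.card_congr (Subgroup.subgroupOfEquivOfLe hLK).toEquiv
  · -- rewrite the sum over K as an iterated sum over cosets
    have step1 : ∑ k : K, Finsupp.single ((k : G) • p) (1 : ℤ)
        = ∑ k : K, Finsupp.single (((k⁻¹ : K) : G) • p) (1 : ℤ) := by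
      rw [← Equiv.sum_comp (Equiv.inv K)
        (fun k : K => Finsupp.single (((k⁻¹ : K) : G) • p) (1:ℤ))]
      exact Finset.sum_congr rfl fun k _ => by simp
    have step2 : ∑ k : K, Finsupp.single (((k⁻¹ : K) : G) • p) (1 : ℤ)
        = ∑ q : K ⧸ L', ∑ l : L', Finsupp.single ((((q.out * l)⁻¹ : K) : G) • p) (1 : ℤ) := by
      rw [← Equiv.sum_comp (cosetProdEquiv L')
        (fun k : K => Finsupp.single (((k⁻¹ : K) : G) • p) (1:ℤ)), Fintype.sum_prod_type]
      rfl
    have step3 : ∀ q : K ⧸ L',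
        ∑ l : L', Finsupp.single ((((q.out * l)⁻¹ : K) : G) • p) (1 : ℤ)
        = ∑ l : L, Finsupp.single ((l : G) • (((q.out⁻¹ : K) : G) • p)) (1 : ℤ) := by
      intro q
      have e1 : ∑ l : L', Finsupp.single ((((q.out * l)⁻¹ : K) : G) • p) (1 : ℤ)
          = ∑ l : L', Finsupp.single (((l : K) : G) • (((q.out⁻¹ : K) : G) • p)) (1 : ℤ) := by
        rw [← Equiv.sum_comp (Equiv.inv L')
          (fun l : L' => Finsupp.single (((l : K) : G) • (((q.out⁻¹ : K) : G) • p)) (1:ℤ))]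
        refine Finset.sum_congr rfl fun l _ => ?_
        congr 1
        simp [mul_smul, mul_inv_rev]
      rw [e1, ← Equiv.sum_comp (Subgroup.subgroupOfEquivOfLe hLK).toEquiv
        (fun l : L => Finsupp.single ((l : G) • (((q.out⁻¹ : K) : G) • p)) (1:ℤ))]
      exact Finset.sum_congr rfl fun l _ => rfl
    rw [step1, step2]
    have : C.linEquiv
        (∑ q : K ⧸ L', ∑ l : L, Finsupp.single ((l : G) • (((q.out⁻¹ : K) : G) • p)) (1 : ℤ))
        (∑ _q : K ⧸ L', ∑ l : L, Finsupp.single ((l : G) • p) (1 : ℤ)) :=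
      linEquiv_sum C _ _ _ fun q _ => hLequiv _ _
    rw [Finset.sum_const, Finset.card_univ] at this
    simpa only [step3] using this

/-- Let G be a finite group acting on a smooth projective curve X, and let
H, N, L ≤ G with L ⊆ H ∩ N, |H| - |N| = |L|, and D_{L,p} ~ D_{L,q} for all
p, q ∈ X.  Then D_{H,p} - D_{N,p} ~ D_{L,p} for every p ∈ X. -/
theorem orbit_divisor_sub_linEquiv (C : SmoothProjectiveCurve)
    (G : Type*) [Group G] [Fintype G] [MulAction G C.Point]
    (H N L : Subgroup G) [Fintype H] [Fintype N] [Fintype L]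
    (hL : L ≤ H ⊓ N)
    (hcard : (Nat.card H : ℤ) - Nat.card N = Nat.card L)
    (hLequiv : ∀ p q : C.Point,
      C.linEquiv (∑ l : L, Finsupp.single ((l : G) • p) (1 : ℤ))
        (∑ l : L, Finsupp.single ((l : G) • q) (1 : ℤ))) :
    ∀ p : C.Point,
      C.linEquiv
        ((∑ h : H, Finsupp.single ((h : G) • p) (1 : ℤ)) -
          ∑ n : N, Finsupp.single ((n : G) • p) (1 : ℤ))
        (∑ l : L, Finsupp.single ((l : G) • p) (1 : ℤ)) := by
  intro p
  obtain ⟨a, ha, hA⟩ := orbit_divisor_decomp C L H (hL.trans inf_le_left) p hLequiv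
  obtain ⟨b, hb, hB⟩ := orbit_divisor_decomp C L N (hL.trans inf_le_right) p hLequiv
  have hLpos : 0 < Nat.card L := Nat.card_pos
  have hab : a = b + 1 := by
    rw [ha, hb] at hcard
    have h1 : ((a : ℤ) - b) * Nat.card L = 1 * Nat.card L := by push_cast at hcard ⊢; linarith
    have h2 : (a : ℤ) - b = 1 :=
      mul_right_cancel₀ (by exact_mod_cast hLpos.ne') h1
    omega
  set DL := ∑ l : L, Finsupp.single ((l : G) • p) (1 : ℤ) with hDL
  have heq : ((b + 1) • DL + -(b • DL)) = DL := by
    rw [add_smul, one_smul]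
    abel
  rw [sub_eq_add_neg]
  subst hab
  exact C.linEquiv_trans (C.linEquiv_add hA (C.linEquiv_neg hB)) (by rw [heq]; exact C.linEquiv_refl DL)
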